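/- arXiv:2508.01949 — 4 statements merged into one kernel-verified Lean document; each statement's English description precedes it below -/
import Mathlib

section
/- Let S be a left ample subsemigroup of an inverse semigroup T (i.e. ss⁻¹ ∈ S for all s ∈ S). Then the homomorphism ρ̂_S : S → I_S, s ↦ σ_s = ρ_s|_{Tss⁻¹ ∩ S}, is injective. -/
/-- An inverse semigroup: every element `a` has an inverse `a⁻¹`, and it is unique. -/
class InverseSemigroup (T : Type*) extends Semigroup T, Inv T where
  mul_inv_mul : ∀ a : T, a * a⁻¹ * a = a
  inv_mul_inv : ∀ a : T, a⁻¹ * a * a⁻¹ = a⁻¹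
  inv_unique : ∀ {a b : T}, a * b * a = a → b * a * b = b → b = a⁻¹

open scoped Classical

/-- The restriction σ_s = ρ_s|_{Tss⁻¹ ∩ Y} of the Wagner–Preston partial bijection
ρ_s : a ↦ a*s to a subset Y, as a partial map (an element of I_Y). -/
noncomputable def sigmaMap {T : Type*} [InverseSemigroup T] (Y : Set T) (s : T) : T → Option T :=
  fun a => if a ∈ Y ∧ ∃ t : T, a = t * (s * s⁻¹) then some (a * s) else none

/-- Composition of partial maps (the product in a symmetric inverse semigroup). -/
def pcomp {α : Type*} (f g : α → Option α) : α → Option α := fun a => (f a).bind g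

/-- The inverse of a partial map: defined on the image of an injective partial map. -/
noncomputable def pinv {α : Type*} (f : α → Option α) : α → Option α :=
  fun b => if h : ∃ a : α, f a = some b then some h.choose else none

/-!
Evaluating `σ_s` at `ss⁻¹ ∈ S` gives `s`. So if `σ_s = σ_u`, then `ss⁻¹` lies in the domain
`Tuu⁻¹` of `σ_u` and `ss⁻¹ u = s`, and symmetrically. The first facts say `ss⁻¹ ≤ uu⁻¹` and
`uu⁻¹ ≤ ss⁻¹` in the natural order of idempotents, which is antisymmetric because idempotents
of an inverse semigroup commute; hence `ss⁻¹ = uu⁻¹` and `s = ss⁻¹ u = uu⁻¹ u = u`.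
-/

namespace InverseSemigroup

variable {T : Type*} [InverseSemigroup T]

theorem inv_inv (a : T) : a⁻¹⁻¹ = a :=
  (inv_unique (inv_mul_inv a) (mul_inv_mul a)).symm

theorem isIdempotentElem_mul_inv (a : T) : IsIdempotentElem (a * a⁻¹) := by
  rw [IsIdempotentElem, ← mul_assoc, mul_inv_mul]

theorem inv_eq_self_of_isIdempotentElem {e : T} (he : IsIdempotentElem e) : e⁻¹ = e :=
  (inv_unique (by rw [he.eq, he.eq]) (by rw [he.eq, he.eq])).symm

theorem isIdempotentElem_mul {e f : T} (he : IsIdempotentElem e)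
    (hf : IsIdempotentElem f) : IsIdempotentElem (e * f) := by
  set x := (e * f)⁻¹
  have hx : x * (e * f) * x = x := inv_mul_inv (e * f)
  -- `f x e` is an inverse of `e f`, hence equals `x`, and is visibly idempotent.
  have hfxe : f * x * e = x := by
    refine inv_unique ?_ ?_
    · calc e * f * (f * x * e) * (e * f) = e * f * x * (e * f) := by
            simp only [mul_assoc, ← mul_assoc f f, hf.eq, ← mul_assoc e e, he.eq]
        _ = e * f := mul_inv_mul (e * f)
    · calc f * x * e * (e * f) * (f * x * e) = f * (x * (e * f) * x) * e := by
            simp only [mul_assoc, ← mul_assoc e e, he.eq, ← mul_assoc f f, hf.eq]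
        _ = f * x * e := by rw [hx, mul_assoc]
  have hx_idem : IsIdempotentElem x := by
    calc x * x = f * (x * (e * f) * x) * e := by
          conv_lhs => rw [← hfxe]
          simp only [mul_assoc]
      _ = x := by rw [hx, hfxe]
  have hef : e * f = x := by rw [← inv_eq_self_of_isIdempotentElem hx_idem, inv_inv]
  rw [hef]
  exact hx_idem

theorem commute_of_isIdempotentElem {e f : T} (he : IsIdempotentElem e)
    (hf : IsIdempotentElem f) : Commute e f := by
  have hef := isIdempotentElem_mul he hf
  have hfe := isIdempotentElem_mul hf he
  -- `e f` and `f e` are mutually inverse, and `e f` is its own inverse.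
  have h : f * e = (e * f)⁻¹ := by
    refine inv_unique ?_ ?_
    · calc e * f * (f * e) * (e * f) = e * f * (e * f) := by
            simp only [mul_assoc, ← mul_assoc f f, hf.eq, ← mul_assoc e e, he.eq]
        _ = e * f := hef.eq
    · calc f * e * (e * f) * (f * e) = f * e * (f * e) := by
            simp only [mul_assoc, ← mul_assoc e e, he.eq, ← mul_assoc f f, hf.eq]
        _ = f * e := hfe.eq
  rw [Commute, SemiconjBy, h, inv_eq_self_of_isIdempotentElem hef]

theorem mul_eq_self_of_eq_mul_isIdempotentElem {e a t : T} (he : IsIdempotentElem e) (ha : a = t * e) :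
    a * e = a := by
  rw [ha, mul_assoc, he.eq]

theorem eq_of_isIdempotentElem_of_mul_eq {e f : T} (he : IsIdempotentElem e)
    (hf : IsIdempotentElem f) (hef : e * f = e) (hfe : f * e = f) : e = f := by
  rw [← hef, commute_of_isIdempotentElem he hf, hfe]

end InverseSemigroup

open InverseSemigroup

section SigmaMap

variable {T : Type*} [InverseSemigroup T]

theorem sigmaMap_eq_some {Y : Set T} {s a b : T} :
    sigmaMap Y s a = some b ↔ (a ∈ Y ∧ ∃ t : T, a = t * (s * s⁻¹)) ∧ a * s = b := by
  unfold sigmaMap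
  split_ifs with h <;> simp [h]

theorem sigmaMap_mul_inv_self {Y : Set T} {s : T}
    (hs : s * s⁻¹ ∈ Y) : sigmaMap Y s (s * s⁻¹) = some s :=
  sigmaMap_eq_some.2
    ⟨⟨hs, s * s⁻¹, (isIdempotentElem_mul_inv s).eq.symm⟩, mul_inv_mul s⟩

theorem mul_inv_mul_eq_and_mul_eq_of_sigmaMap_eq {Y : Set T} {s u : T}
    (hs : s * s⁻¹ ∈ Y) (h : sigmaMap Y s = sigmaMap Y u) :
    s * s⁻¹ * (u * u⁻¹) = s * s⁻¹ ∧ s * s⁻¹ * u = s := by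
  obtain ⟨⟨-, t, ht⟩, hsu⟩ := sigmaMap_eq_some.1 (h ▸ sigmaMap_mul_inv_self hs)
  exact ⟨mul_eq_self_of_eq_mul_isIdempotentElem (isIdempotentElem_mul_inv u) ht, hsu⟩

end SigmaMap

/-- If S is left ample in T (ss⁻¹ ∈ S for all s ∈ S), then ρ̂_S : s ↦ σ_s = ρ_s|_{Tss⁻¹ ∩ S}
is injective on S. -/
theorem stmt7 {T : Type*} [InverseSemigroup T] (S : Subsemigroup T)
    (hla : ∀ s ∈ S, s * s⁻¹ ∈ S) :
    Set.InjOn (fun s => sigmaMap (S : Set T) s) (S : Set T) := by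
  intro s hs u hu h
  obtain ⟨hsu, hs_eq⟩ := mul_inv_mul_eq_and_mul_eq_of_sigmaMap_eq (hla s hs) h
  obtain ⟨hus, -⟩ := mul_inv_mul_eq_and_mul_eq_of_sigmaMap_eq (hla u hu) h.symm
  have heq : s * s⁻¹ = u * u⁻¹ := eq_of_isIdempotentElem_of_mul_eq
    (isIdempotentElem_mul_inv s) (isIdempotentElem_mul_inv u) hsu hus
  rw [← hs_eq, heq, mul_inv_mul]
end

section
/- Let S be a subsemigroup of an inverse semigroup T that is both left and right ample in T (ss⁻¹ ∈ S and s⁻¹s ∈ S for all s ∈ S), and suppose Ts⁻¹s ∩ S = Ss for all s ∈ S. Then the image of ρ̂_S : S → I_S is both left and right ample in I_S. -/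
open scoped Classical

/-!
For `x ∈ S`, `σ_x σ_x⁻¹` and `σ_x⁻¹ σ_x` are the identities on the domain and on the range of
`σ_x`, while `σ_e` is the identity on `Te ∩ S` for an idempotent `e`. The domain of `σ_x` is
`Txx⁻¹ ∩ S` by definition, and the range `(Txx⁻¹ ∩ S)x` is `Sx = Tx⁻¹x ∩ S`, using
`xx⁻¹ ∈ S` for one inclusion. So the two products are `σ_{xx⁻¹}` and `σ_{x⁻¹x}`.
-/

namespace InverseSemigroup

variable {T : Type*} [InverseSemigroup T]

theorem isIdempotentElem_inv_mul (a : T) : IsIdempotentElem (a⁻¹ * a) := by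
  rw [IsIdempotentElem, ← mul_assoc, inv_mul_inv]

theorem exists_eq_mul_iff_mul_eq {e a : T} (he : IsIdempotentElem e) :
    (∃ t, a = t * e) ↔ a * e = a :=
  ⟨fun ⟨t, ht⟩ => by rw [ht, mul_assoc, he.eq], fun h => ⟨a, h.symm⟩⟩

end InverseSemigroup

section PartialMap

variable {α : Type*}

noncomputable def restrictId (D : Set α) : α → Option α := fun a => if a ∈ D then some a else none

theorem pcomp_pinv_eq_restrictId (f : α → Option α)
    (hf : ∀ {a a' b}, f a = some b → f a' = some b → a = a') :
    pcomp f (pinv f) = restrictId {a | ∃ b, f a = some b} := by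
  funext a
  unfold pcomp pinv restrictId
  cases h : f a with
  | none => simp [h]
  | some b =>
    have hex : ∃ a', f a' = some b := ⟨a, h⟩
    simp [hex, h, hf hex.choose_spec h]

theorem pcomp_pinv_eq_restrictId_range (f : α → Option α) :
    pcomp (pinv f) f = restrictId {b | ∃ a, f a = some b} := by
  funext b
  unfold pcomp pinv restrictId
  by_cases hex : ∃ a, f a = some b
  · simp [hex, hex.choose_spec]
  · simp [hex]

end PartialMap

section SigmaMap

open InverseSemigroup

variable {T : Type*} [InverseSemigroup T]

theorem sigmaMap_apply (Y : Set T) (s a : T) :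
    sigmaMap Y s a = if a ∈ Y ∧ a * (s * s⁻¹) = a then some (a * s) else none := by
  simp only [sigmaMap, exists_eq_mul_iff_mul_eq (isIdempotentElem_mul_inv s)]

theorem sigmaMap_eq_some_iff {Y : Set T} {s a b : T} :
    sigmaMap Y s a = some b ↔ (a ∈ Y ∧ a * (s * s⁻¹) = a) ∧ a * s = b := by
  rw [sigmaMap_apply]
  split_ifs with h <;> simp [h]

theorem sigmaMap_injective {Y : Set T} {s a a' b : T} (ha : sigmaMap Y s a = some b)
    (ha' : sigmaMap Y s a' = some b) : a = a' := by
  obtain ⟨⟨-, hae⟩, rfl⟩ := sigmaMap_eq_some_iff.1 ha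
  obtain ⟨⟨-, hae'⟩, hb⟩ := sigmaMap_eq_some_iff.1 ha'
  rw [← hae, ← hae', ← mul_assoc, ← mul_assoc, hb]

theorem sigmaMap_of_isIdempotentElem (Y : Set T) {e : T} (he : IsIdempotentElem e) :
    sigmaMap Y e = restrictId {a | a ∈ Y ∧ a * e = a} := by
  funext a
  rw [sigmaMap_apply, inv_eq_self_of_isIdempotentElem he, he.eq, restrictId]
  split_ifs with h h' h' <;> simp_all

theorem sigmaMap_dom (Y : Set T) (s : T) :
    {a | ∃ b, sigmaMap Y s a = some b} = {a | a ∈ Y ∧ a * (s * s⁻¹) = a} := by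
  ext a
  simp [sigmaMap_eq_some_iff]

theorem sigmaMap_range {S : Subsemigroup T} {s : T} (hs : s ∈ S) (hss : s * s⁻¹ ∈ S)
    (hdom : {a : T | ∃ t : T, a = t * (s⁻¹ * s)} ∩ (S : Set T) = {a : T | ∃ u ∈ S, a = u * s}) :
    {b | ∃ a, sigmaMap S s a = some b} = {b | b ∈ (S : Set T) ∧ b * (s⁻¹ * s) = b} := by
  ext b
  constructor
  · rintro ⟨a, ha⟩
    obtain ⟨⟨haS, -⟩, rfl⟩ := sigmaMap_eq_some_iff.1 ha
    exact ⟨S.mul_mem haS hs, by rw [mul_assoc, ← mul_assoc s, mul_inv_mul]⟩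
  · rintro ⟨hbS, hb⟩
    have hbSs : b ∈ {a : T | ∃ u ∈ S, a = u * s} := by
      rw [← hdom]
      exact ⟨(exists_eq_mul_iff_mul_eq (isIdempotentElem_inv_mul s)).2 hb, hbS⟩
    obtain ⟨u, huS, rfl⟩ := hbSs
    refine ⟨u * (s * s⁻¹), sigmaMap_eq_some_iff.2 ⟨⟨S.mul_mem huS hss, ?_⟩, ?_⟩⟩
    · rw [mul_assoc, (isIdempotentElem_mul_inv s).eq]
    · rw [mul_assoc, mul_inv_mul]

end SigmaMap

open InverseSemigroup in
/-- If S is left and right ample in T and Ts⁻¹s ∩ S = Ss for all s ∈ S, then the image of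
ρ̂_S : S → I_S is both left and right ample in I_S. -/
theorem stmt11 {T : Type*} [InverseSemigroup T] (S : Subsemigroup T)
    (hla : ∀ s ∈ S, s * s⁻¹ ∈ S) (hra : ∀ s ∈ S, s⁻¹ * s ∈ S)
    (hdom : ∀ s ∈ S, {a : T | ∃ t : T, a = t * (s⁻¹ * s)} ∩ (S : Set T) =
      {a : T | ∃ u ∈ S, a = u * s}) :
    ∀ x ∈ S,
      (∃ s ∈ S, pcomp (sigmaMap (S : Set T) x) (pinv (sigmaMap (S : Set T) x)) =
        sigmaMap (S : Set T) s) ∧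
      (∃ s ∈ S, pcomp (pinv (sigmaMap (S : Set T) x)) (sigmaMap (S : Set T) x) =
        sigmaMap (S : Set T) s) := by
  intro x hx
  refine ⟨⟨x * x⁻¹, hla x hx, ?_⟩, ⟨x⁻¹ * x, hra x hx, ?_⟩⟩
  · rw [pcomp_pinv_eq_restrictId _ sigmaMap_injective, sigmaMap_dom,
      sigmaMap_of_isIdempotentElem _ (isIdempotentElem_mul_inv x)]
  · rw [pcomp_pinv_eq_restrictId_range, sigmaMap_range hx (hla x hx) (hdom x hx),
      sigmaMap_of_isIdempotentElem _ (isIdempotentElem_inv_mul x)]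
end

section
/- Let B = (I × G × I) ∪ {0} be a Brandt semigroup with I = {1,2,3}, G a group, and S = ({1,2} × G × I) ∪ {0}. Then S is a subsemigroup of B that is left ample in B but not right ample in B. -/
/-- The Brandt semigroup B = (I × G × I) ∪ {0}; `none` is the zero element. -/
abbrev Brandt (I G : Type*) := Option (I × G × I)

/-- Brandt semigroup multiplication: (i,a,j)(k,b,l) = (i,ab,l) if j = k, else 0;
0 is absorbing. -/
def bmul {I G : Type*} [DecidableEq I] [Mul G] : Brandt I G → Brandt I G → Brandt I G
  | some (i, a, j), some (k, b, l) => if j = k then some (i, a * b, l) else none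
  | _, _ => none

/-- Inversion in a Brandt semigroup: (i,g,j)⁻¹ = (j,g⁻¹,i), 0⁻¹ = 0. -/
def binv {I G : Type*} [Inv G] : Brandt I G → Brandt I G
  | some (i, g, j) => some (j, g⁻¹, i)
  | none => none

/-- The subsemigroup S = ({1,2} × G × I) ∪ {0} of B = (I × G × I) ∪ {0} with I = {1,2,3}
(realized as Fin 3, excluding first coordinate 2). -/
def S14 (G : Type*) : Set (Brandt (Fin 3) G) :=
  {b | b = none ∨ ∃ i g j, b = some (i, g, j) ∧ i ≠ 2}

/-!
The set `S` consists of zero and the elements whose row index lies in a fixed set of rows.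
Every product `s b` has the row of `s` (or is zero), so `S` is a right ideal of `B`; in
particular it is a subsemigroup containing every `s s⁻¹`. On the other hand `s⁻¹ s` sits in
the row of the column of `s`, so `S` fails to be right ample as soon as some element of `S`
has its column index outside the allowed rows, e.g. `(1, 1, 3)`.
-/

namespace Brandt

variable {I G : Type*}

def rowSet (p : I → Prop) : Set (Brandt I G) :=
  {b | b = none ∨ ∃ i g j, b = some (i, g, j) ∧ p i}

@[simp]
theorem none_mem_rowSet (p : I → Prop) : (none : Brandt I G) ∈ rowSet p :=
  Or.inl rfl

@[simp]
theorem some_mem_rowSet_iff {p : I → Prop} {i j : I} {g : G} :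
    some (i, g, j) ∈ rowSet p ↔ p i := by
  simp [rowSet]

theorem bmul_mem_rowSet [DecidableEq I] [Mul G] {p : I → Prop} {s : Brandt I G}
    (hs : s ∈ rowSet p) (b : Brandt I G) : bmul s b ∈ rowSet p := by
  rcases hs with rfl | ⟨i, g, j, rfl, hi⟩
  · simp [bmul]
  · rcases b with _ | ⟨k, h, l⟩
    · simp [bmul]
    · simp only [bmul]
      split_ifs <;> simp [hi]

theorem bmul_binv_self_some [DecidableEq I] [Group G] (i j : I) (g : G) :
    bmul (binv (some (i, g, j))) (some (i, g, j)) = some (j, g⁻¹ * g, j) := by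
  simp [bmul, binv]

end Brandt

open Brandt

/-- S = ({1,2} × G × I) ∪ {0} is a subsemigroup of B which is left ample but not right
ample in B. -/
theorem stmt14 {G : Type*} [Group G] :
    (∀ u ∈ S14 G, ∀ v ∈ S14 G, bmul u v ∈ S14 G) ∧
    (∀ s ∈ S14 G, bmul s (binv s) ∈ S14 G) ∧
    (∃ s ∈ S14 G, bmul (binv s) s ∉ S14 G) := by
  have hS : S14 G = rowSet (· ≠ 2) := rfl
  rw [hS]
  refine ⟨fun u hu v _ => bmul_mem_rowSet hu v, fun s hs => bmul_mem_rowSet hs _,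
    some (0, 1, 2), by simp, ?_⟩
  rw [bmul_binv_self_some]
  simp
end

section
/- Let T = Q⁺ be the multiplicative monoid of positive rationals and S = {n ∈ ℕ : n ≥ 2} its subsemigroup. Then for any monoid W and any pair of monoid homomorphisms α, β : Q⁺ → W agreeing on S, α = β; in particular Dom_T(S) = T. -/
/-!
Every positive rational is `(2 num) / (2 den)`, so `S` generates `Q⁺` as a group. The set where
two monoid homomorphisms out of a group agree is a subgroup even when the target is only a monoid
(`f x = g x` forces `f x⁻¹ = f x⁻¹ * g x * g x⁻¹ = g x⁻¹`), hence agreeing on `S` they agree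
everywhere.
-/

/-- The multiplicative monoid (in fact group) Q⁺ of positive rationals. -/
abbrev Qpos : Type := {q : ℚ // 0 < q}

/-- The natural number n ≥ 2 viewed as an element of Q⁺. -/
def npos (n : ℕ) (hn : 2 ≤ n) : Qpos :=
  ⟨(n : ℚ), by exact_mod_cast lt_of_lt_of_le two_pos hn⟩

/-- The dominion (with respect to monoid homomorphisms into monoids) of a subset S of Q⁺. -/
def dominionM (S : Set Qpos) : Set Qpos :=
  {d | ∀ (W : Type) [Monoid W] (f g : Qpos →* W), (∀ s ∈ S, f s = g s) → f d = g d}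


lemma exists_eq_npos_mul_inv_npos (q : Qpos) :
    ∃ (a b : ℕ) (ha : 2 ≤ a) (hb : 2 ≤ b), q = npos a ha * (npos b hb)⁻¹ := by
  obtain ⟨a, ha⟩ : ∃ a : ℕ, (a : ℤ) = q.1.num := ⟨_, Int.toNat_of_nonneg (Rat.num_pos.2 q.2).le⟩
  have ha1 : 1 ≤ a := by have := Rat.num_pos.2 q.2; omega
  -- doubling numerator and denominator pushes both to at least 2
  refine ⟨2 * a, 2 * q.1.den, by omega, by have := q.1.den_pos; omega, Subtype.ext ?_⟩
  change q.1 = ((2 * a : ℕ) : ℚ) * ((2 * q.1.den : ℕ) : ℚ)⁻¹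
  push_cast
  rw [← Int.cast_natCast, ha, mul_inv, mul_mul_mul_comm, mul_inv_cancel₀ two_ne_zero, one_mul,
    ← div_eq_mul_inv, Rat.num_div_den]

lemma closure_npos_eq_top :
    Subgroup.closure {x : Qpos | ∃ (n : ℕ) (hn : 2 ≤ n), x = npos n hn} = ⊤ := by
  refine eq_top_iff.2 fun q _ => ?_
  obtain ⟨a, b, ha, hb, rfl⟩ := exists_eq_npos_mul_inv_npos q
  exact mul_mem (Subgroup.subset_closure ⟨a, ha, rfl⟩)
    (inv_mem (Subgroup.subset_closure ⟨b, hb, rfl⟩))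

/-- Any two monoid homomorphisms from Q⁺ into a monoid W that agree on
S = {n ∈ ℕ : n ≥ 2} are equal; in particular Dom_T(S) = T. -/
theorem stmt18 :
    (∀ (W : Type) [Monoid W] (α β : Qpos →* W),
      (∀ (n : ℕ) (hn : 2 ≤ n), α (npos n hn) = β (npos n hn)) → α = β) ∧
    dominionM {x : Qpos | ∃ (n : ℕ) (hn : 2 ≤ n), x = npos n hn} = Set.univ := by
  have hom_eq : ∀ (W : Type) [Monoid W] (α β : Qpos →* W),
      (∀ (n : ℕ) (hn : 2 ≤ n), α (npos n hn) = β (npos n hn)) → α = β := by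
    intro W _ α β h
    refine MonoidHom.eq_of_eqOn_dense closure_npos_eq_top ?_
    rintro _ ⟨n, hn, rfl⟩
    exact h n hn
  refine ⟨hom_eq, Set.eq_univ_of_forall fun d W _ f g h => ?_⟩
  rw [hom_eq W f g fun n hn => h _ ⟨n, hn, rfl⟩]
end
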